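/- Let m ≥ 0 and n ≥ 1 be integers and let q be a real polynomial with deg q < n. Then ∫_0^1 x^m · P_{m,n}(x) · q(x) dx = 0. -/

import Mathlib

/-!
Write `f = X^(m+n) (X-1)^n`, so that `x^m P_{m,n}(x) = f⁽ⁿ⁾(x) / n!`. Since `f` vanishes to
order `n` at both `0` and `1`, every `f⁽ᵏ⁾` with `k < n` vanishes at the endpoints, and `n`
integrations by parts move all derivatives onto `q`, where `q⁽ⁿ⁾ = 0`.
-/

open Polynomial intervalIntegral

namespace Polynomial

theorem eval_iterate_derivative_eq_zero_of_pow_dvd {R : Type*} [CommRing R] {p : R[X]} {a : R}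
    {r k : ℕ} (hdvd : (X - C a) ^ r ∣ p) (hk : k < r) : (derivative^[k] p).eval a = 0 := by
  obtain ⟨g, hg⟩ := pow_sub_dvd_iterate_derivative_of_pow_dvd k hdvd
  rw [hg, eval_mul, eval_pow, eval_sub, eval_X, eval_C, sub_self, zero_pow (by omega), zero_mul]

theorem integral_eval_mul_eval_derivative (p q : ℝ[X]) (a b : ℝ) :
    ∫ x in a..b, p.eval x * (derivative q).eval x =
      p.eval b * q.eval b - p.eval a * q.eval a -
        ∫ x in a..b, (derivative p).eval x * q.eval x :=
  integral_mul_deriv_eq_deriv_mul (fun x _ => p.hasDerivAt x) (fun x _ => q.hasDerivAt x)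
    (p.derivative.continuous.intervalIntegrable _ _)
    (q.derivative.continuous.intervalIntegrable _ _)

theorem integral_eval_mul_eval_iterate_derivative_eq_zero {f q : ℝ[X]} {a b : ℝ} {n : ℕ}
    (ha : (X - C a) ^ n ∣ f) (hb : (X - C b) ^ n ∣ f) (hq : derivative^[n] q = 0) :
    ∫ x in a..b, q.eval x * (derivative^[n] f).eval x = 0 := by
  induction n generalizing q with
  | zero => simp_all
  | succ n ih =>
    have hlt : n < n + 1 := n.lt_succ_self
    rw [Function.iterate_succ_apply', integral_eval_mul_eval_derivative,
      eval_iterate_derivative_eq_zero_of_pow_dvd ha hlt,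
      eval_iterate_derivative_eq_zero_of_pow_dvd hb hlt,
      ih ((pow_dvd_pow _ hlt.le).trans ha) ((pow_dvd_pow _ hlt.le).trans hb)
        (by rwa [← Function.iterate_succ_apply])]
    ring

end Polynomial

theorem stmt_6_general (P : ℕ → ℕ → Polynomial ℝ)
    (hP : ∀ m n, 1 ≤ n →
      (X : Polynomial ℝ) ^ m * P m n
        = C (1 / (n.factorial : ℝ)) *
            derivative^[n] (X ^ (m + n) * (X - 1) ^ n))
    (m n : ℕ) (hn : 1 ≤ n) (q : Polynomial ℝ) (hq : q.degree < n) :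
    ∫ x in (0:ℝ)..1, x ^ m * ((P m n).eval x * q.eval x) = 0 := by
  set f : ℝ[X] := X ^ (m + n) * (X - 1) ^ n
  have hrodrigues (x : ℝ) :
      x ^ m * (P m n).eval x = 1 / (n.factorial : ℝ) * (derivative^[n] f).eval x := by
    simpa using congrArg (eval x) (hP m n hn)
  have hzero : (X - C 0) ^ n ∣ f :=
    dvd_mul_of_dvd_left (by simpa using pow_dvd_pow X (n.le_add_left m)) _
  have hone : (X - C 1) ^ n ∣ f := dvd_mul_of_dvd_right (by rw [C_1]) _
  calc ∫ x in (0:ℝ)..1, x ^ m * ((P m n).eval x * q.eval x)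
      = ∫ x in (0:ℝ)..1, 1 / (n.factorial : ℝ) * (q.eval x * (derivative^[n] f).eval x) := by
        congr 1 with x
        linear_combination q.eval x * hrodrigues x
    _ = 0 := by
        rw [integral_const_mul,
          integral_eval_mul_eval_iterate_derivative_eq_zero hzero hone
            (iterate_derivative_eq_zero_of_degree_lt hq), mul_zero]

/-- `P m n` is orthogonal, with respect to the weight `x^m` on `[0,1]`, to every
polynomial `q` of degree less than `n`. -/
theorem stmt_6 (P : ℕ → ℕ → Polynomial ℝ)
    (hP0 : ∀ m, P m 0 = 1)
    (hP : ∀ m n, 1 ≤ n →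
      (X : Polynomial ℝ) ^ m * P m n
        = C (1 / (n.factorial : ℝ)) *
            derivative^[n] (X ^ (m + n) * (X - 1) ^ n))
    (m n : ℕ) (hn : 1 ≤ n) (q : Polynomial ℝ) (hq : q.degree < n) :
    ∫ x in (0:ℝ)..1, x ^ m * ((P m n).eval x * q.eval x) = 0 :=
  stmt_6_general P hP m n hn q hq
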